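/- Let J ∈ ℕ, J ≥ 1, T > 0, γ ≥ 0, and 0 < m₀ ≤ m₁. Let M : [0, T] → ℝ^{J×J} be continuously differentiable with M(t) symmetric and m₀ ‖x‖² ≤ xᵀ M(t) x ≤ m₁ ‖x‖² for all x ∈ ℝ^J and t ∈ [0, T], and with |xᵀ M′(t) x| ≤ 2γ · xᵀ M(t) x for all x ∈ ℝ^J and t ∈ [0, T]. Let (Ω, F, P) be a probability space, and for each ω ∈ Ω let S(ω) : [0, T] → ℝ^{J×J} be continuous with S(ω)(t) symmetric positive semidefinite for all t, and let U(ω) : [0, T] → ℝ^J be continuously differentiable with (d/dt)(M(t)U(ω)(t)) + S(ω)(t)U(ω)(t) = 0 on [0, T]. Assume ω ↦ sup_{t∈[0,T]} ‖U(ω)(t)‖² is measurable and ω ↦ U(ω)(0) belongs to L²(Ω; ℝ^J). Then ∫_Ω sup_{t∈[0,T]} ‖U(ω)(t)‖² dP(ω) ≤ (m₁/m₀) · e^{2γT} · ∫_Ω ‖U(ω)(0)‖² dP(ω). -/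

import Mathlib

/-!
Along each sample path the energy `E(t) = U(t)ᵀ M(t) U(t)` satisfies, by the symmetry of `M`,
`E' = -2 UᵀSU - UᵀM'U ≤ 2γ E`, since `S` is positive semidefinite. Grönwall's inequality gives
`E(t) ≤ e^{2γt} E(0)`, and the mass-matrix bounds turn this into
`‖U(t)‖² ≤ (m₁/m₀) e^{2γT} ‖U(0)‖²` uniformly in `t`. Integrating over `Ω` gives the claim.
-/

open MeasureTheory Set
open scoped Matrix

section Calculus

variable {m n : Type*} [Fintype n] {s : Set ℝ} {t : ℝ}

theorem HasDerivWithinAt.dotProduct {u v : ℝ → n → ℝ} {u' v' : n → ℝ}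
    (hu : HasDerivWithinAt u u' s t) (hv : HasDerivWithinAt v v' s t) :
    HasDerivWithinAt (fun r => u r ⬝ᵥ v r) (u' ⬝ᵥ v t + u t ⬝ᵥ v') s t := by
  simp only [_root_.dotProduct, ← Finset.sum_add_distrib]
  exact HasDerivWithinAt.fun_sum fun i _ =>
    (hasDerivWithinAt_pi.1 hu i).mul (hasDerivWithinAt_pi.1 hv i)

theorem HasDerivWithinAt.matrix_mulVec {A : ℝ → Matrix m n ℝ} {A' : Matrix m n ℝ}
    {u : ℝ → n → ℝ} {u' : n → ℝ}
    (hA : ∀ i j, HasDerivWithinAt (fun r => A r i j) (A' i j) s t)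
    (hu : HasDerivWithinAt u u' s t) :
    HasDerivWithinAt (fun r => A r *ᵥ u r) (A' *ᵥ u t + A t *ᵥ u') s t :=
  hasDerivWithinAt_pi.2 fun i => (hasDerivWithinAt_pi.2 fun j => hA i j).dotProduct hu

/-- Stated through the derivative `w` of `M u`, which is what an equation `(M u)' = -S u`
prescribes; `u'` only enters through the symmetry of `M t`. -/
theorem hasDerivWithinAt_dotProduct_mulVec_self {M : ℝ → Matrix n n ℝ} {M' : Matrix n n ℝ}
    {u : ℝ → n → ℝ} {u' w : n → ℝ} (hs : UniqueDiffWithinAt ℝ s t)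
    (hM : ∀ i j, HasDerivWithinAt (fun r => M r i j) (M' i j) s t) (hMt : (M t).IsSymm)
    (hu : HasDerivWithinAt u u' s t) (hMu : HasDerivWithinAt (fun r => M r *ᵥ u r) w s t) :
    HasDerivWithinAt (fun r => u r ⬝ᵥ M r *ᵥ u r) (2 * (u t ⬝ᵥ w) - u t ⬝ᵥ M' *ᵥ u t) s t := by
  have hw : w = M' *ᵥ u t + M t *ᵥ u' := hs.eq_deriv s hMu (.matrix_mulVec hM hu)
  have hsymm : u' ⬝ᵥ M t *ᵥ u t = u t ⬝ᵥ M t *ᵥ u' := by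
    rw [Matrix.dotProduct_mulVec, ← Matrix.mulVec_transpose, hMt.eq, dotProduct_comm]
  convert hu.dotProduct hMu using 1
  rw [hsymm, hw, dotProduct_add]
  ring

theorem le_mul_exp_of_hasDerivWithinAt_le_mul {f f' : ℝ → ℝ} {a b K : ℝ}
    (hf : ∀ t ∈ Icc a b, HasDerivWithinAt f (f' t) (Icc a b) t)
    (hbound : ∀ t ∈ Ico a b, f' t ≤ K * f t) :
    ∀ t ∈ Icc a b, f t ≤ f a * Real.exp (K * (t - a)) := by
  intro t ht
  have hright : ∀ x ∈ Ico a b, HasDerivWithinAt f (f' x) (Ici x) x := fun x hx =>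
    (hf x (Ico_subset_Icc_self hx)).mono_of_mem_nhdsWithin (Icc_mem_nhdsGE_of_mem hx)
  rw [← gronwallBound_ε0]
  exact le_gronwallBound_of_liminf_deriv_right_le (fun x hx => (hf x hx).continuousWithinAt)
      (fun x hx _ hr => (hright x hx).liminf_right_slope_le hr) le_rfl
      (fun x hx => (hbound x hx).trans_eq (add_zero _).symm) t ht

end Calculus

section EnergyEstimate

variable {n : Type*} [Fintype n] {a b K : ℝ} {M M' S : ℝ → Matrix n n ℝ} {u : ℝ → n → ℝ}

theorem energy_le_mul_exp (hab : a < b)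
    (hM : ∀ t ∈ Icc a b, ∀ i j, HasDerivWithinAt (fun r => M r i j) (M' t i j) (Icc a b) t)
    (hMsymm : ∀ t ∈ Icc a b, (M t).IsSymm)
    (hM' : ∀ t ∈ Icc a b, ∀ x, -(x ⬝ᵥ M' t *ᵥ x) ≤ K * (x ⬝ᵥ M t *ᵥ x))
    (hS : ∀ t ∈ Icc a b, (S t).PosSemidef) (hu : DifferentiableOn ℝ u (Icc a b))
    (hODE : ∀ t ∈ Icc a b,
      HasDerivWithinAt (fun r => M r *ᵥ u r) (-(S t *ᵥ u t)) (Icc a b) t) :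
    ∀ t ∈ Icc a b, u t ⬝ᵥ M t *ᵥ u t ≤ u a ⬝ᵥ M a *ᵥ u a * Real.exp (K * (t - a)) := by
  refine le_mul_exp_of_hasDerivWithinAt_le_mul (fun t ht =>
    hasDerivWithinAt_dotProduct_mulVec_self (uniqueDiffOn_Icc hab t ht) (hM t ht) (hMsymm t ht)
      (hu t ht).hasDerivWithinAt (hODE t ht)) fun t ht => ?_
  have ht' := Ico_subset_Icc_self ht
  have hSu : 0 ≤ u t ⬝ᵥ S t *ᵥ u t := by
    simpa using (Matrix.posSemidef_iff_dotProduct_mulVec.mp (hS t ht')).2 (u t)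
  have hM'u := hM' t ht' (u t)
  rw [dotProduct_neg]
  linarith

theorem dotProduct_self_le_mul_exp (hab : a < b) (hK : 0 ≤ K) {m₀ m₁ : ℝ} (hm₀ : 0 < m₀)
    (hMlow : ∀ t ∈ Icc a b, ∀ x, m₀ * (x ⬝ᵥ x) ≤ x ⬝ᵥ M t *ᵥ x)
    (hMup : ∀ x, x ⬝ᵥ M a *ᵥ x ≤ m₁ * (x ⬝ᵥ x))
    (hM : ∀ t ∈ Icc a b, ∀ i j, HasDerivWithinAt (fun r => M r i j) (M' t i j) (Icc a b) t)
    (hMsymm : ∀ t ∈ Icc a b, (M t).IsSymm)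
    (hM' : ∀ t ∈ Icc a b, ∀ x, -(x ⬝ᵥ M' t *ᵥ x) ≤ K * (x ⬝ᵥ M t *ᵥ x))
    (hS : ∀ t ∈ Icc a b, (S t).PosSemidef) (hu : DifferentiableOn ℝ u (Icc a b))
    (hODE : ∀ t ∈ Icc a b,
      HasDerivWithinAt (fun r => M r *ᵥ u r) (-(S t *ᵥ u t)) (Icc a b) t) :
    ∀ t ∈ Icc a b, u t ⬝ᵥ u t ≤ m₁ / m₀ * Real.exp (K * (b - a)) * (u a ⬝ᵥ u a) := by
  intro t ht
  have ha : a ∈ Icc a b := left_mem_Icc.2 hab.le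
  have hE0 : 0 ≤ u a ⬝ᵥ M a *ᵥ u a :=
    (mul_nonneg hm₀.le (dotProduct_self_star_nonneg (u a))).trans (hMlow a ha (u a))
  have hexp : Real.exp (K * (t - a)) ≤ Real.exp (K * (b - a)) :=
    Real.exp_le_exp.2 (mul_le_mul_of_nonneg_left (by linarith [ht.2]) hK)
  rw [div_mul_eq_mul_div, div_mul_eq_mul_div, le_div_iff₀ hm₀, mul_comm]
  calc m₀ * (u t ⬝ᵥ u t) ≤ u t ⬝ᵥ M t *ᵥ u t := hMlow t ht (u t)
    _ ≤ u a ⬝ᵥ M a *ᵥ u a * Real.exp (K * (t - a)) :=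
      energy_le_mul_exp hab hM hMsymm hM' hS hu hODE t ht
    _ ≤ u a ⬝ᵥ M a *ᵥ u a * Real.exp (K * (b - a)) := mul_le_mul_of_nonneg_left hexp hE0
    _ ≤ m₁ * (u a ⬝ᵥ u a) * Real.exp (K * (b - a)) :=
      mul_le_mul_of_nonneg_right (hMup (u a)) (Real.exp_pos _).le
    _ = _ := by ring

end EnergyEstimate

theorem random_linear_system_mean_square_stability_general
    (J : ℕ) (T : ℝ) (hT : 0 < T) (γ : ℝ) (hγ : 0 ≤ γ)
    (m₀ m₁ : ℝ) (hm₀ : 0 < m₀)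
    (M M' : ℝ → Matrix (Fin J) (Fin J) ℝ)
    (hMderiv : ∀ t ∈ Set.Icc (0 : ℝ) T, ∀ i j,
      HasDerivWithinAt (fun s => M s i j) (M' t i j) (Set.Icc 0 T) t)
    (hMsymm : ∀ t ∈ Set.Icc (0 : ℝ) T, (M t).IsSymm)
    (hMbounds : ∀ t ∈ Set.Icc (0 : ℝ) T, ∀ x : Fin J → ℝ,
      m₀ * (x ⬝ᵥ x) ≤ x ⬝ᵥ (M t).mulVec x ∧ x ⬝ᵥ (M t).mulVec x ≤ m₁ * (x ⬝ᵥ x))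
    (hM'bound : ∀ t ∈ Set.Icc (0 : ℝ) T, ∀ x : Fin J → ℝ,
      abs (x ⬝ᵥ (M' t).mulVec x) ≤ 2 * γ * (x ⬝ᵥ (M t).mulVec x))
    {Ω : Type*} [MeasurableSpace Ω] (P : Measure Ω)
    (S : Ω → ℝ → Matrix (Fin J) (Fin J) ℝ)
    (hSpsd : ∀ ω : Ω, ∀ t ∈ Set.Icc (0 : ℝ) T, (S ω t).PosSemidef)
    (U : Ω → ℝ → Fin J → ℝ)
    (hUC1 : ∀ ω, ContDiffOn ℝ 1 (U ω) (Set.Icc 0 T))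
    (hODE : ∀ ω : Ω, ∀ t ∈ Set.Icc (0 : ℝ) T,
      HasDerivWithinAt (fun s => (M s).mulVec (U ω s))
        (-(S ω t).mulVec (U ω t)) (Set.Icc 0 T) t)
    (hL2 : Integrable (fun ω => U ω 0 ⬝ᵥ U ω 0) P) :
    ∫ ω, (⨆ t : Set.Icc (0 : ℝ) T, U ω t ⬝ᵥ U ω t) ∂P
      ≤ (m₁ / m₀) * Real.exp (2 * γ * T) * ∫ ω, U ω 0 ⬝ᵥ U ω 0 ∂P := by
  have h0 : (0 : ℝ) ∈ Icc 0 T := left_mem_Icc.2 hT.le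
  have : Nonempty (Icc (0 : ℝ) T) := ⟨⟨0, h0⟩⟩
  have hpath : ∀ ω, ∀ t ∈ Icc (0 : ℝ) T,
      U ω t ⬝ᵥ U ω t ≤ m₁ / m₀ * Real.exp (2 * γ * T) * (U ω 0 ⬝ᵥ U ω 0) := fun ω => by
    simpa only [sub_zero] using dotProduct_self_le_mul_exp hT (by positivity) hm₀
      (fun t ht x => (hMbounds t ht x).1) (fun x => (hMbounds 0 h0 x).2) hMderiv hMsymm
      (fun t ht x => (neg_le_abs _).trans (hM'bound t ht x)) (hSpsd ω)
      ((hUC1 ω).differentiableOn one_ne_zero) (hODE ω)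
  calc ∫ ω, (⨆ t : Icc (0 : ℝ) T, U ω t ⬝ᵥ U ω t) ∂P
      ≤ ∫ ω, m₁ / m₀ * Real.exp (2 * γ * T) * (U ω 0 ⬝ᵥ U ω 0) ∂P :=
        integral_mono_of_nonneg
          (ae_of_all _ fun ω => Real.iSup_nonneg fun t => dotProduct_self_star_nonneg _)
          (hL2.const_mul _) (ae_of_all _ fun ω => ciSup_le fun t => hpath ω t t.2)
    _ = _ := integral_const_mul _ _

/-- Mean-square stability bound for the semi-discrete random evolving surface finite
element solution: with a deterministic `C¹` symmetric mass matrix `M(t)` satisfying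
`m₀‖x‖² ≤ xᵀM(t)x ≤ m₁‖x‖²` and `|xᵀM′(t)x| ≤ 2γ xᵀM(t)x`, and for each sample `ω` a
continuous symmetric positive semidefinite stiffness matrix `S(ω,t)` and a `C¹` solution
`U(ω)` of `(d/dt)(M(t)U(ω)(t)) + S(ω,t)U(ω)(t) = 0`, one has
`∫_Ω sup_{t∈[0,T]} ‖U(ω)(t)‖² dP ≤ (m₁/m₀) e^{2γT} ∫_Ω ‖U(ω)(0)‖² dP`
(`‖x‖² = x ⬝ᵥ x` is the squared Euclidean norm). -/
theorem random_linear_system_mean_square_stability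
    (J : ℕ) (hJ : 1 ≤ J) (T : ℝ) (hT : 0 < T) (γ : ℝ) (hγ : 0 ≤ γ)
    (m₀ m₁ : ℝ) (hm₀ : 0 < m₀) (hm₀₁ : m₀ ≤ m₁)
    (M M' : ℝ → Matrix (Fin J) (Fin J) ℝ)
    (hMderiv : ∀ t ∈ Set.Icc (0 : ℝ) T, ∀ i j,
      HasDerivWithinAt (fun s => M s i j) (M' t i j) (Set.Icc 0 T) t)
    (hM'cont : ∀ i j, ContinuousOn (fun t => M' t i j) (Set.Icc 0 T))
    (hMsymm : ∀ t ∈ Set.Icc (0 : ℝ) T, (M t).IsSymm)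
    (hMbounds : ∀ t ∈ Set.Icc (0 : ℝ) T, ∀ x : Fin J → ℝ,
      m₀ * (x ⬝ᵥ x) ≤ x ⬝ᵥ (M t).mulVec x ∧ x ⬝ᵥ (M t).mulVec x ≤ m₁ * (x ⬝ᵥ x))
    (hM'bound : ∀ t ∈ Set.Icc (0 : ℝ) T, ∀ x : Fin J → ℝ,
      abs (x ⬝ᵥ (M' t).mulVec x) ≤ 2 * γ * (x ⬝ᵥ (M t).mulVec x))
    {Ω : Type*} [MeasurableSpace Ω] (P : Measure Ω) [IsProbabilityMeasure P]
    (S : Ω → ℝ → Matrix (Fin J) (Fin J) ℝ)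
    (hScont : ∀ ω : Ω, ∀ i j, ContinuousOn (fun t => S ω t i j) (Set.Icc 0 T))
    (hSpsd : ∀ ω : Ω, ∀ t ∈ Set.Icc (0 : ℝ) T, (S ω t).PosSemidef)
    (U : Ω → ℝ → Fin J → ℝ)
    (hUC1 : ∀ ω, ContDiffOn ℝ 1 (U ω) (Set.Icc 0 T))
    (hODE : ∀ ω : Ω, ∀ t ∈ Set.Icc (0 : ℝ) T,
      HasDerivWithinAt (fun s => (M s).mulVec (U ω s))
        (-(S ω t).mulVec (U ω t)) (Set.Icc 0 T) t)
    (hmeas : Measurable fun ω => ⨆ t : Set.Icc (0 : ℝ) T, U ω t ⬝ᵥ U ω t)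
    (hL2 : Integrable (fun ω => U ω 0 ⬝ᵥ U ω 0) P) :
    ∫ ω, (⨆ t : Set.Icc (0 : ℝ) T, U ω t ⬝ᵥ U ω t) ∂P
      ≤ (m₁ / m₀) * Real.exp (2 * γ * T) * ∫ ω, U ω 0 ⬝ᵥ U ω 0 ∂P :=
  random_linear_system_mean_square_stability_general J T hT γ hγ m₀ m₁ hm₀ M M' hMderiv hMsymm
    hMbounds hM'bound P S hSpsd U hUC1 hODE hL2
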